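/- Let d ≥ 1, let w ∈ ℤ^d, let B = 2w + {0,1}^d, let g : B → ℝ, and let μ := 2^{−d}·Σ_{u∈B} g(u). Then Σ_{u∈B} |g(u) − μ| ≤ Σ over edges {u,v} ∈ E(ℤ^d) with u, v ∈ B of |g(u) − g(v)|. -/

import Mathlib

namespace DF

/-- The base lattice `ℤ^d`. -/
abbrev Base (d : ℕ) := Fin d → ℤ

/-- ℓ¹ distance on the base lattice. -/
def dist1 {d : ℕ} (u v : Base d) : ℤ := ∑ i, |u i - v i|

/-- Nearest-neighbour adjacency on the base lattice. -/
def baseAdj {d : ℕ} (u v : Base d) : Prop := dist1 u v = 1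

/-- Edges of the base lattice `ℤ^d`: unordered pairs at ℓ¹-distance 1. -/
def IsBaseEdge {d : ℕ} (e : Sym2 (Base d)) : Prop :=
  ∃ u v : Base d, baseAdj u v ∧ e = s(u, v)

/-- `|τ u − τ v|` over an unordered pair. -/
def pairAbsDiff {d : ℕ} (τ : Base d → ℤ) : Sym2 (Base d) → ℤ :=
  Sym2.lift ⟨fun u v => |τ u - τ v|, fun _ _ => abs_sub_comm _ _⟩

/-- A shift: a finitely supported `τ : ℤ^d → ℤ`. -/
def IsShift {d : ℕ} (τ : Base d → ℤ) : Prop := {v | τ v ≠ 0}.Finite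

/-- Total variation of a shift: the sum of `|τ u − τ v|` over all edges. -/
noncomputable def TV {d : ℕ} (τ : Base d → ℤ) : ℤ :=
  ∑ᶠ e ∈ {e : Sym2 (Base d) | IsBaseEdge e}, pairAbsDiff τ e

/-- Total variation of `τ` restricted to edges with both endpoints in `A`. -/
noncomputable def TVon {d : ℕ} (τ : Base d → ℤ) (A : Set (Base d)) : ℤ :=
  ∑ᶠ e ∈ {e : Sym2 (Base d) | IsBaseEdge e ∧ ∀ x ∈ e, x ∈ A}, pairAbsDiff τ e

/-- The discrete cube `Q_N(c) = c + {0,1,…,N−1}^d` as a finset. -/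
noncomputable def cubeFinset {d : ℕ} (N : ℕ) (c : Base d) : Finset (Base d) :=
  Fintype.piFinset fun i => Finset.Ico (c i) (c i + (N : ℤ))

/-- The base point `N·⌊u/N⌋` of the cube of side `N` containing `u`. -/
def cubePt {d : ℕ} (N : ℕ) (u : Base d) : Base d := fun i => N * Int.fdiv (u i) N

/-- The average `τ^rough_N(u)` of `τ` over the cube of the partition `𝒫_N`
containing `u`. -/
noncomputable def roughAvg {d : ℕ} (N : ℕ) (τ : Base d → ℤ) (u : Base d) : ℝ :=
  (∑ w ∈ cubeFinset N (cubePt N u), (τ w : ℝ)) / (N : ℝ) ^ d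

/-- The integer nearest to `a`, with the convention `[k + 1/2] = k`. -/
noncomputable def nearestInt (a : ℝ) : ℤ := ⌈a - 1 / 2⌉

/-- The coarse graining `τ_N`. -/
noncomputable def coarse {d : ℕ} (N : ℕ) (τ : Base d → ℤ) (u : Base d) : ℤ :=
  nearestInt (roughAvg N τ u)

end DF

namespace DF

/-- `|g u − g v|` over an unordered pair, for a real-valued function. -/
def pairAbsR {d : ℕ} (g : Base d → ℝ) : Sym2 (Base d) → ℝ :=
  Sym2.lift ⟨fun u v => |g u - g v|, fun _ _ => abs_sub_comm _ _⟩

end DF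

open DF

/-!
Identify `B` with the group `(ZMod 2)^d` and put `D s = ∑ a, |g a - g (a + s)|`. Translation
invariance of the counting measure makes `D` subadditive, so `D s ≤ ∑ i, D (s i • eᵢ)`. Hence
`∑ a, |g a - μ| ≤ 2⁻ᵈ ∑ a, ∑ b, |g a - g b| = 2⁻ᵈ ∑ s, D s ≤ ½ ∑ i, D eᵢ`, since each coordinate
vector `eᵢ` occurs in half of the `s`; and `∑ i, D eᵢ` counts every edge of `B` twice.
-/

open Finset

lemma sum_abs_sub_average_le {α : Type*} [Fintype α] (g : α → ℝ) :
    ∑ a, |g a - (∑ b, g b) / Fintype.card α| ≤ (∑ a, ∑ b, |g a - g b|) / Fintype.card α := by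
  rw [sum_div univ fun a => ∑ b, |g a - g b|]
  refine sum_le_sum fun a _ => ?_
  have hcard : (Fintype.card α : ℝ) ≠ 0 := by
    have : Nonempty α := ⟨a⟩
    positivity
  calc |g a - (∑ b, g b) / Fintype.card α| = |∑ b, (g a - g b)| / Fintype.card α := by
        rw [sum_sub_distrib, sum_const, card_univ, nsmul_eq_mul, ← Nat.abs_cast, ← abs_div,
          Nat.abs_cast]
        congr 1
        field_simp
    _ ≤ (∑ b, |g a - g b|) / Fintype.card α := by
        gcongr
        exact abs_sum_le_sum_abs _ _

section Variation

variable {A : Type*} [AddCommGroup A] [Fintype A]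

def variationAlong (g : A → ℝ) (s : A) : ℝ := ∑ a, |g a - g (a + s)|

@[simp]
lemma variationAlong_zero (g : A → ℝ) : variationAlong g 0 = 0 := by
  simp [variationAlong]

lemma variationAlong_add_le (g : A → ℝ) (s t : A) :
    variationAlong g (s + t) ≤ variationAlong g s + variationAlong g t := by
  have htransl : ∑ a, |g (a + s) - g (a + s + t)| = variationAlong g t :=
    Equiv.sum_comp (Equiv.addRight s) fun a => |g a - g (a + t)|
  calc variationAlong g (s + t)
      ≤ ∑ a, (|g a - g (a + s)| + |g (a + s) - g (a + s + t)|) := by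
        unfold variationAlong
        gcongr with a
        rw [← add_assoc]
        exact abs_sub_le _ _ _
    _ = variationAlong g s + variationAlong g t := by
        rw [sum_add_distrib, htransl]; rfl

lemma sum_sum_abs_sub_eq_sum_variationAlong (g : A → ℝ) :
    ∑ a, ∑ b, |g a - g b| = ∑ s, variationAlong g s := by
  calc ∑ a, ∑ b, |g a - g b| = ∑ a, ∑ s, |g a - g (a + s)| :=
        sum_congr rfl fun a _ => (Equiv.sum_comp (Equiv.addLeft a) fun b => |g a - g b|).symm
    _ = ∑ s, variationAlong g s := sum_comm

lemma variationAlong_le_sum_single {ι M : Type*} [Fintype ι] [DecidableEq ι] [AddCommGroup M]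
    [Fintype M] (g : (ι → M) → ℝ) (s : ι → M) :
    variationAlong g s ≤ ∑ i, variationAlong g (Pi.single i (s i)) := by
  conv_lhs => rw [← Finset.univ_sum_single s]
  exact le_sum_of_subadditive _ (variationAlong_zero g).le (variationAlong_add_le g) _ _

end Variation

lemma two_mul_sum_apply_zmod_two {ι : Type*} [Fintype ι] [DecidableEq ι] (h : ZMod 2 → ℝ)
    (i : ι) :
    2 * ∑ s : ι → ZMod 2, h (s i) = 2 ^ Fintype.card ι * (h 0 + h 1) := by
  have hshift : ∑ s : ι → ZMod 2, h (s i) = ∑ s : ι → ZMod 2, h (s i + 1) := by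
    rw [← Equiv.sum_comp (Equiv.addRight (Pi.single i 1))]
    simp
  have hpair : ∀ z : ZMod 2, h z + h (z + 1) = h 0 + h 1 := by
    intro z
    fin_cases z
    · rfl
    · exact add_comm _ _
  calc 2 * ∑ s : ι → ZMod 2, h (s i) = ∑ s : ι → ZMod 2, (h (s i) + h (s i + 1)) := by
        rw [two_mul]; nth_rw 2 [hshift]; rw [sum_add_distrib]
    _ = 2 ^ Fintype.card ι * (h 0 + h 1) := by
        simp [hpair, mul_add]

lemma sum_abs_sub_average_le_half_sum_variationAlong_single {ι : Type*} [Fintype ι]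
    [DecidableEq ι] (g : (ι → ZMod 2) → ℝ) :
    ∑ a, |g a - (∑ b, g b) / 2 ^ Fintype.card ι| ≤
      (∑ i, variationAlong g (Pi.single i 1)) / 2 := by
  have hcard : (Fintype.card (ι → ZMod 2) : ℝ) = 2 ^ Fintype.card ι := by simp
  have hsingles : ∑ s : ι → ZMod 2, ∑ i, variationAlong g (Pi.single i (s i)) =
      2 ^ Fintype.card ι * ((∑ i, variationAlong g (Pi.single i 1)) / 2) := by
    rw [sum_comm, sum_div, mul_sum]
    refine sum_congr rfl fun i _ => ?_
    have := two_mul_sum_apply_zmod_two (fun z => variationAlong g (Pi.single i z)) i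
    simp only [Pi.single_zero, variationAlong_zero, zero_add] at this
    linarith
  calc ∑ a, |g a - (∑ b, g b) / 2 ^ Fintype.card ι|
      ≤ (∑ a, ∑ b, |g a - g b|) / 2 ^ Fintype.card ι := hcard ▸ sum_abs_sub_average_le g
    _ = (∑ s, variationAlong g s) / 2 ^ Fintype.card ι := by
        rw [sum_sum_abs_sub_eq_sum_variationAlong]
    _ ≤ (∑ s : ι → ZMod 2, ∑ i, variationAlong g (Pi.single i (s i))) / 2 ^ Fintype.card ι := by
        gcongr with s
        exact variationAlong_le_sum_single g s
    _ = (∑ i, variationAlong g (Pi.single i 1)) / 2 := by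
        rw [hsingles, mul_div_cancel_left₀ _ (by positivity)]

lemma sum_comp_sym2Mk_eq_two_nsmul {α M : Type*} [DecidableEq α] [AddCommMonoid M]
    (P : Finset (α × α)) (hswap : ∀ p ∈ P, p.swap ∈ P) (hdiag : ∀ p ∈ P, p.1 ≠ p.2)
    (f : Sym2 α → M) :
    ∑ p ∈ P, f s(p.1, p.2) = 2 • ∑ e ∈ P.image (fun p => s(p.1, p.2)), f e := by
  rw [sum_comp, smul_sum]
  refine sum_congr rfl fun e he => ?_
  obtain ⟨p, hp, rfl⟩ := mem_image.mp he
  have hfiber : {q ∈ P | s(q.1, q.2) = s(p.1, p.2)} = {p, p.swap} := by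
    ext q
    simp only [mem_filter, mem_insert, mem_singleton, Sym2.mk_eq_mk_iff]
    constructor
    · exact fun h => h.2
    · rintro (rfl | rfl)
      · exact ⟨hp, Or.inl rfl⟩
      · exact ⟨hswap p hp, Or.inr rfl⟩
  have hne : p ≠ p.swap := fun h => hdiag p hp (congrArg Prod.fst h)
  rw [hfiber, card_pair hne]

namespace DF

variable {d : ℕ}

instance : DecidableRel (baseAdj (d := d)) := fun u v =>
  inferInstanceAs (Decidable (dist1 u v = 1))

lemma baseAdj_comm {u v : Base d} : baseAdj u v ↔ baseAdj v u := by
  simp only [baseAdj, dist1, abs_sub_comm]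

lemma not_baseAdj_self (u : Base d) : ¬ baseAdj u u := by
  simp [baseAdj, dist1]

lemma isBaseEdge_mk {u v : Base d} : IsBaseEdge s(u, v) ↔ baseAdj u v := by
  constructor
  · rintro ⟨u', v', hadj, he⟩
    rcases Sym2.eq_iff.mp he with ⟨rfl, rfl⟩ | ⟨rfl, rfl⟩
    · exact hadj
    · exact baseAdj_comm.mp hadj
  · exact fun h => ⟨u, v, h, rfl⟩

lemma setOf_isBaseEdge_within_eq (s : Finset (Base d)) :
    {e : Sym2 (Base d) | IsBaseEdge e ∧ ∀ x ∈ e, x ∈ (s : Set (Base d))} =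
      ↑(({p ∈ s ×ˢ s | baseAdj p.1 p.2} : Finset (Base d × Base d)).image
        fun p => s(p.1, p.2)) := by
  ext e
  induction e using Sym2.ind with
  | h u v =>
    simp only [Set.mem_ofPred_eq, isBaseEdge_mk, Sym2.mem_iff, forall_eq_or_imp, forall_eq,
      coe_image, Set.mem_image, mem_coe, mem_filter, mem_product, Sym2.eq_iff]
    constructor
    · rintro ⟨hadj, hu, hv⟩
      exact ⟨(u, v), ⟨⟨hu, hv⟩, hadj⟩, Or.inl ⟨rfl, rfl⟩⟩
    · rintro ⟨⟨a, b⟩, ⟨⟨ha, hb⟩, hadj⟩, ⟨rfl, rfl⟩ | ⟨rfl, rfl⟩⟩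
      · exact ⟨hadj, ha, hb⟩
      · exact ⟨baseAdj_comm.mp hadj, hb, ha⟩

lemma sum_abs_sub_baseAdj_eq_two_mul_finsum (s : Finset (Base d)) (g : Base d → ℝ) :
    ∑ p ∈ s ×ˢ s with baseAdj p.1 p.2, |g p.1 - g p.2| =
      2 * ∑ᶠ e ∈ {e : Sym2 (Base d) | IsBaseEdge e ∧ ∀ x ∈ e, x ∈ (s : Set (Base d))},
        pairAbsR g e := by
  rw [setOf_isBaseEdge_within_eq, finsum_mem_coe_finset, ← Nat.cast_ofNat, ← nsmul_eq_mul]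
  refine sum_comp_sym2Mk_eq_two_nsmul _ (fun p hp => ?_) (fun p hp => ?_) (pairAbsR g)
  · simp only [mem_filter, mem_product] at hp ⊢
    exact ⟨hp.1.symm, baseAdj_comm.mp hp.2⟩
  · rintro h
    exact not_baseAdj_self p.1 (h ▸ (mem_filter.mp hp).2)

def cubeVertex (c : Base d) (a : Fin d → ZMod 2) : Base d := fun i => c i + (a i).val

lemma mem_cubeFinset_two {c u : Base d} :
    u ∈ cubeFinset 2 c ↔ ∀ i, c i ≤ u i ∧ u i < c i + 2 := by
  simp [cubeFinset]

lemma cubeVertex_mem_cubeFinset_two (c : Base d) (a : Fin d → ZMod 2) :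
    cubeVertex c a ∈ cubeFinset 2 c := by
  rw [mem_cubeFinset_two]
  intro i
  have := ZMod.val_lt (a i)
  simp only [cubeVertex]
  omega

lemma cubeVertex_injective (c : Base d) : Function.Injective (cubeVertex c) := by
  intro a b h
  funext i
  have := congrFun h i
  simp only [cubeVertex, add_right_inj, Nat.cast_inj] at this
  exact ZMod.val_injective 2 this

lemma sum_cubeFinset_two_eq {M : Type*} [AddCommMonoid M] (c : Base d) (f : Base d → M) :
    ∑ u ∈ cubeFinset 2 c, f u = ∑ a, f (cubeVertex c a) := by
  symm
  refine sum_nbij' (cubeVertex c) (fun u i => ((u i - c i : ℤ) : ZMod 2)) ?_ ?_ ?_ ?_ ?_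
  · exact fun a _ => cubeVertex_mem_cubeFinset_two c a
  · simp
  · intro a _
    funext i
    simp [cubeVertex]
  · intro u hu
    rw [mem_cubeFinset_two] at hu
    funext i
    have := hu i
    simp only [cubeVertex, ZMod.val_intCast]
    omega
  · intro a _
    rfl

lemma baseAdj_cubeVertex_add_single (c : Base d) (a : Fin d → ZMod 2) (i : Fin d) :
    baseAdj (cubeVertex c a) (cubeVertex c (a + Pi.single i 1)) := by
  have hcoord : ∀ j, |cubeVertex c a j - cubeVertex c (a + Pi.single i 1) j| =
      if j = i then 1 else 0 := by
    intro j
    by_cases hj : j = i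
    · subst hj
      simp only [cubeVertex, Pi.add_apply, Pi.single_eq_same, if_true, add_sub_add_left_eq_sub]
      generalize a j = z
      fin_cases z <;> decide
    · simp [cubeVertex, hj]
  simp [baseAdj, dist1, hcoord]

lemma sum_variationAlong_single_le (c : Base d) (g : Base d → ℝ) :
    ∑ i, variationAlong (g ∘ cubeVertex c) (Pi.single i 1) ≤
      ∑ p ∈ cubeFinset 2 c ×ˢ cubeFinset 2 c with baseAdj p.1 p.2, |g p.1 - g p.2| := by
  set edge : (Fin d → ZMod 2) × Fin d → Base d × Base d :=
    fun q => (cubeVertex c q.1, cubeVertex c (q.1 + Pi.single q.2 1))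
  have hinj : Function.Injective edge := by
    rintro ⟨a, i⟩ ⟨b, j⟩ h
    simp only [edge, Prod.mk.injEq] at h
    obtain rfl := cubeVertex_injective c h.1
    have hsingle := congrFun (add_left_cancel (cubeVertex_injective c h.2)) i
    by_contra hij
    rw [Pi.single_eq_same, Pi.single_eq_of_ne (fun h => hij (by rw [h]))] at hsingle
    exact one_ne_zero hsingle
  have hsub : univ.image edge ⊆ {p ∈ cubeFinset 2 c ×ˢ cubeFinset 2 c | baseAdj p.1 p.2} := by
    simp only [subset_iff, mem_image, mem_univ, true_and, mem_filter, mem_product]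
    rintro _ ⟨⟨a, i⟩, rfl⟩
    exact ⟨⟨cubeVertex_mem_cubeFinset_two c _, cubeVertex_mem_cubeFinset_two c _⟩,
      baseAdj_cubeVertex_add_single c a i⟩
  calc ∑ i, variationAlong (g ∘ cubeVertex c) (Pi.single i 1)
      = ∑ p ∈ univ.image edge, |g p.1 - g p.2| := by
        rw [sum_image (fun q _ r _ h => hinj h), Fintype.sum_prod_type, sum_comm]
        rfl
    _ ≤ _ := sum_le_sum_of_subset_of_nonneg hsub fun _ _ _ => abs_nonneg _

end DF

theorem mean_deviation_le_edge_variation_on_binary_cube_general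
    (d : ℕ) (w : Base d) (g : Base d → ℝ) :
    ∑ u ∈ cubeFinset 2 (fun i => 2 * w i),
        |g u - (∑ x ∈ cubeFinset 2 (fun i => 2 * w i), g x) / 2 ^ d| ≤
      ∑ᶠ e ∈ {e : Sym2 (Base d) | IsBaseEdge e ∧
          ∀ x ∈ e, x ∈ (cubeFinset 2 (fun i => 2 * w i) : Set (Base d))},
        pairAbsR g e := by
  set c : Base d := fun i => 2 * w i
  have hcube := sum_abs_sub_average_le_half_sum_variationAlong_single (g ∘ cubeVertex c)
  rw [Fintype.card_fin] at hcube
  rw [← mul_div_cancel_left₀ (∑ᶠ e ∈ _, pairAbsR g e) two_ne_zero,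
    ← sum_abs_sub_baseAdj_eq_two_mul_finsum, sum_cubeFinset_two_eq c, sum_cubeFinset_two_eq c]
  calc _ ≤ (∑ i, variationAlong (g ∘ cubeVertex c) (Pi.single i 1)) / 2 := hcube
    _ ≤ _ := by
        gcongr
        exact sum_variationAlong_single_le c g

/-- For `B = 2w + {0,1}^d` and `g : B → ℝ` with mean `μ`,
`Σ_{u∈B} |g(u) − μ| ≤ Σ_{edges {u,v} ⊆ B} |g(u) − g(v)|`. -/
theorem mean_deviation_le_edge_variation_on_binary_cube
    (d : ℕ) (hd : 1 ≤ d) (w : Base d) (g : Base d → ℝ) :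
    ∑ u ∈ cubeFinset 2 (fun i => 2 * w i),
        |g u - (∑ x ∈ cubeFinset 2 (fun i => 2 * w i), g x) / 2 ^ d| ≤
      ∑ᶠ e ∈ {e : Sym2 (Base d) | IsBaseEdge e ∧
          ∀ x ∈ e, x ∈ (cubeFinset 2 (fun i => 2 * w i) : Set (Base d))},
        pairAbsR g e :=
  mean_deviation_le_edge_variation_on_binary_cube_general d w g
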